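/- Let V be a commutative unital quantale, H = (A, F) a V-F-semilattice, L₁, L₂ V-modules, and f : L₁ → L₂ a V-module homomorphism. For each V-module homomorphism α : A → L₁, the composite f ∘ α : A → L₂ is a V-module homomorphism, and the induced map J[H,f] : α ↦ f ∘ α is a V-frame homomorphism from (Hom(A,L₁), r₁) to (Hom(A,L₂), r₂), i.e. r₁(α, β) ≤ r₂(f∘α, f∘β) for all α, β, where rₖ(α,β) = ⋀_{x ∈ A} (β(x) →_{Lₖ} α(F(x))) and a → b = ⨆{v | v * a ≤ b}. -/
import Mathlib


/-- A commutative unital quantale structure on a complete lattice `V`. -/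
structure CommQuantale (V : Type*) [CompleteLattice V] where
  mul : V → V → V
  e : V
  mul_assoc : ∀ a b c : V, mul (mul a b) c = mul a (mul b c)
  mul_comm : ∀ a b : V, mul a b = mul b a
  mul_sSup : ∀ (a : V) (S : Set V), mul a (sSup S) = ⨆ s ∈ S, mul a s
  sSup_mul : ∀ (S : Set V) (a : V), mul (sSup S) a = ⨆ s ∈ S, mul s a
  mul_e : ∀ a : V, mul a e = a
  e_mul : ∀ a : V, mul e a = a

/-- A (left) module over a commutative unital quantale. -/
structure QModule {V : Type*} [CompleteLattice V] (Q : CommQuantale V)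
    (A : Type*) [CompleteLattice A] where
  smul : V → A → A
  smul_sSup : ∀ (v : V) (S : Set A), smul v (sSup S) = ⨆ s ∈ S, smul v s
  sSup_smul : ∀ (S : Set V) (a : A), smul (sSup S) a = ⨆ v ∈ S, smul v a
  mul_smul : ∀ (u v : V) (a : A), smul u (smul v a) = smul (Q.mul u v) a
  e_smul : ∀ a : A, smul Q.e a = a

/-- A homomorphism of quantale modules: preserves all joins and the action. -/
def IsModHom {V A B : Type*} [CompleteLattice V] [CompleteLattice A] [CompleteLattice B]
    {Q : CommQuantale V} (M : QModule Q A) (N : QModule Q B) (f : A → B) : Prop :=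
  (∀ S : Set A, f (sSup S) = ⨆ a ∈ S, f a) ∧
  ∀ (v : V) (a : A), f (M.smul v a) = N.smul v (f a)

theorem QModule.smul_iSup {V A : Type*} [CompleteLattice V] [CompleteLattice A]
    {Q : CommQuantale V} (M : QModule Q A) {ι : Sort*} (v : V) (g : ι → A) :
    M.smul v (⨆ i, g i) = ⨆ i, M.smul v (g i) := by
  rw [iSup, M.smul_sSup, iSup_range]

theorem QModule.iSup_smul {V A : Type*} [CompleteLattice V] [CompleteLattice A]
    {Q : CommQuantale V} (M : QModule Q A) {ι : Sort*} (g : ι → V) (a : A) :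
    M.smul (⨆ i, g i) a = ⨆ i, M.smul (g i) a := by
  rw [iSup, M.sSup_smul, iSup_range]

/-- The pointwise module structure on `T → A`. -/
def QModule.pi {V : Type*} [CompleteLattice V] {Q : CommQuantale V}
    {A : Type*} [CompleteLattice A] (M : QModule Q A) (T : Type*) :
    QModule Q (T → A) where
  smul v x := fun t => M.smul v (x t)
  smul_sSup v S := by
    funext t
    simp only [sSup_apply, iSup_apply]
    rw [M.smul_iSup]
    exact (iSup_subtype' (p := fun x => x ∈ S) (f := fun x _ => M.smul v (x t))).symm
  sSup_smul S a := by
    funext t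
    simp only [iSup_apply]
    rw [M.sSup_smul]
  mul_smul u v a := by funext t; exact M.mul_smul u v (a t)
  e_smul a := by funext t; exact M.e_smul (a t)

/-- The tense operator constructed from a `V`-frame `r` on `T`. -/
def FJ {V A T : Type*} [CompleteLattice V] [CompleteLattice A] {Q : CommQuantale V}
    (M : QModule Q A) (r : T → T → V) (x : T → A) : T → A :=
  fun i => ⨆ k, M.smul (r i k) (x k)


/-- The residual `a → b = ⨆{v | v * a ≤ b}` in a `V`-module. -/
def resid {V L : Type*} [CompleteLattice V] [CompleteLattice L]
    {Q : CommQuantale V} (M : QModule Q L) (a b : L) : V :=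
  sSup {v : V | M.smul v a ≤ b}

/-- The frame relation `r(α, β) = ⋀_x (β(x) → α(F(x)))` on module homomorphisms. -/
def frameRel {V A L : Type*} [CompleteLattice V] [CompleteLattice A] [CompleteLattice L]
    {Q : CommQuantale V} (ML : QModule Q L) (F : A → A) (α β : A → L) : V :=
  ⨅ x : A, resid ML (β x) (α (F x))


theorem IsModHom.map_iSup {V A B : Type*} [CompleteLattice V] [CompleteLattice A] [CompleteLattice B]
    {Q : CommQuantale V} {M : QModule Q A} {N : QModule Q B} {f : A → B}
    (hf : IsModHom M N f) {ι : Sort*} (g : ι → A) : f (⨆ i, g i) = ⨆ i, f (g i) := by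
  rw [iSup, hf.1, iSup_range]

theorem IsModHom.mono {V A B : Type*} [CompleteLattice V] [CompleteLattice A] [CompleteLattice B]
    {Q : CommQuantale V} {M : QModule Q A} {N : QModule Q B} {f : A → B}
    (hf : IsModHom M N f) {a b : A} (hab : a ≤ b) : f a ≤ f b := by
  have : f (sSup {a, b}) = ⨆ x ∈ ({a, b} : Set A), f x := hf.1 _
  rw [sSup_pair, sup_eq_right.mpr hab] at this
  rw [this]
  exact le_iSup₂ (f := fun x _ => f x) a (by simp)

/-- postcomposition with a module homomorphism `f : L₁ → L₂`
gives a `V`-frame homomorphism `J[H, f] : J[H, L₁] → J[H, L₂]`. -/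
theorem stmt12 {V A L₁ L₂ : Type*} [CompleteLattice V] [CompleteLattice A]
    [CompleteLattice L₁] [CompleteLattice L₂]
    (Q : CommQuantale V) (MA : QModule Q A) (ML₁ : QModule Q L₁) (ML₂ : QModule Q L₂)
    (F : A → A) (hF : IsModHom MA MA F)
    (f : L₁ → L₂) (hf : IsModHom ML₁ ML₂ f) :
    (∀ α : A → L₁, IsModHom MA ML₁ α → IsModHom MA ML₂ (f ∘ α)) ∧
    (∀ α β : A → L₁, IsModHom MA ML₁ α → IsModHom MA ML₁ β →
      frameRel ML₁ F α β ≤ frameRel ML₂ F (f ∘ α) (f ∘ β)) := by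
  refine ⟨fun α hα => ⟨fun S => by simp [Function.comp, hα.1, hf.map_iSup, iSup_subtype'],
    fun v a => by simp [Function.comp, hα.2, hf.2]⟩, fun α β hα hβ => ?_⟩
  refine le_iInf fun x => ?_
  refine (iInf_le _ x).trans (sSup_le fun v hv => le_sSup ?_)
  simp only [Set.mem_setOf_eq, Function.comp_apply] at hv ⊢
  rw [← hf.2]
  exact hf.mono hv
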